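/- Let Λ²(Λ²U*) denote the (4,0)-tensors on an n-dimensional inner product space U (n≥3) that are antisymmetric in the first and last pairs of entries and satisfy Q(X,Y,Z,W)=-Q(Z,W,X,Y). Then the map π: Q ↦ (1/(2-n))·c(Q)⧢g is an orthogonal projection of Λ²(Λ²U*) onto itself, so the two summands in Q = -(1/(n-2))·c(Q)⧢g + (Q + (1/(n-2))·c(Q)⧢g) are orthogonal. -/
import Mathlib


open Finset

def gdelta (n : ℕ) : Fin n → Fin n → ℝ := fun i j => if i = j then 1 else 0

def kn {n : ℕ} (h k : Fin n → Fin n → ℝ) : Fin n → Fin n → Fin n → Fin n → ℝ :=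
  fun X Y Z W => h X Z * k Y W + h Y W * k X Z - h X W * k Y Z - h Y Z * k X W

def ric {n : ℕ} (Q : Fin n → Fin n → Fin n → Fin n → ℝ) : Fin n → Fin n → ℝ :=
  fun X Y => ∑ i, Q i X Y i

def inner4 {n : ℕ} (P Q : Fin n → Fin n → Fin n → Fin n → ℝ) : ℝ :=
  ∑ i, ∑ j, ∑ k, ∑ l, P i j k l * Q i j k l

/-- The map π : Q ↦ (1/(2-n))·c(Q)⧢g. -/
noncomputable def piMap {n : ℕ} (Q : Fin n → Fin n → Fin n → Fin n → ℝ) :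
    Fin n → Fin n → Fin n → Fin n → ℝ :=
  fun X Y Z W => (1 / (2 - (n : ℝ))) * kn (ric Q) (gdelta n) X Y Z W

/-- A (4,0)-tensor belongs to Λ²(Λ²U*): antisymmetric in the first and last pair
of entries and antisymmetric under exchange of the two pairs. -/
def memL2L2 {n : ℕ} (Q : Fin n → Fin n → Fin n → Fin n → ℝ) : Prop :=
  (∀ X Y Z W, Q X Y Z W = -(Q Y X Z W)) ∧
  (∀ X Y Z W, Q X Y Z W = -(Q X Y W Z)) ∧
  (∀ X Y Z W, Q X Y Z W = -(Q Z W X Y))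

lemma ric_skew {n : ℕ} {Q : Fin n → Fin n → Fin n → Fin n → ℝ} (hQ : memL2L2 Q) :
    ∀ X Y, ric Q Y X = -(ric Q X Y) := by
  obtain ⟨h1, h2, h3⟩ := hQ
  intro X Y
  unfold ric
  rw [← Finset.sum_neg_distrib]
  refine Finset.sum_congr rfl fun i _ => ?_
  rw [h3 i Y X i, h2 X i i Y, h1 X i Y i]
  ring

lemma memL2L2_kn {n : ℕ} (A : Fin n → Fin n → ℝ) (hA : ∀ X Y, A Y X = -(A X Y)) :
    memL2L2 (kn A (gdelta n)) := by
  have hg : ∀ a b : Fin n, gdelta n a b = gdelta n b a := by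
    intro a b; simp [gdelta, eq_comm]
  refine ⟨fun X Y Z W => ?_, fun X Y Z W => ?_, fun X Y Z W => ?_⟩ <;> unfold kn
  · ring
  · ring
  · rw [hA X Z, hA Y W, hA Y Z, hA X W, hg W Y, hg W X, hg Z Y, hg Z X]
    ring

lemma ric_kn {n : ℕ} (A : Fin n → Fin n → ℝ) (hA0 : ∀ i, A i i = 0) :
    ∀ X Y, ric (kn A (gdelta n)) X Y = (2 - (n : ℝ)) * A X Y := by
  intro X Y
  unfold ric kn gdelta
  simp only [mul_ite, mul_one, mul_zero, if_pos rfl]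
  rw [Finset.sum_sub_distrib, Finset.sum_sub_distrib, Finset.sum_add_distrib]
  simp [hA0, Finset.sum_ite_eq, Finset.sum_ite_eq', Finset.card_univ]
  ring

lemma inner4_kn {n : ℕ} (A : Fin n → Fin n → ℝ) {Q : Fin n → Fin n → Fin n → Fin n → ℝ}
    (hQ : memL2L2 Q) :
    inner4 (kn A (gdelta n)) Q = -4 * ∑ i, ∑ j, A i j * ric Q i j := by
  obtain ⟨h1, h2, h3⟩ := hQ
  have hsum1 : ∀ i k : Fin n, (∑ j, Q i j k j) = -(ric Q i k) := by
    intro i k; unfold ric; rw [← Finset.sum_neg_distrib]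
    exact Finset.sum_congr rfl fun j _ => h1 i j k j
  have hsum2 : ∀ j l : Fin n, (∑ i, Q i j i l) = -(ric Q j l) := by
    intro j l; unfold ric; rw [← Finset.sum_neg_distrib]
    exact Finset.sum_congr rfl fun i _ => h2 i j i l
  have hsum3 : ∀ i l : Fin n, (∑ j, Q i j j l) = ric Q i l := by
    intro i l; unfold ric
    refine Finset.sum_congr rfl fun j _ => ?_
    rw [h1 i j j l, h2 j i j l]; ring
  have hsum4 : ∀ j k : Fin n, (∑ i, Q i j k i) = ric Q j k := fun j k => rfl
  unfold inner4 kn gdelta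
  simp only [add_mul, sub_mul]
  simp only [Finset.sum_add_distrib, Finset.sum_sub_distrib]
  have e1 : (∑ i, ∑ j, ∑ k, ∑ l, (A i k * (if j = l then (1:ℝ) else 0)) * Q i j k l)
      = ∑ x, ∑ y, A x y * -(ric Q x y) := by
    have step : ∀ i j k, (∑ l, (A i k * (if j = l then (1:ℝ) else 0)) * Q i j k l)
        = A i k * Q i j k j := by intro i j k; simp
    simp only [step]
    refine Finset.sum_congr rfl fun i _ => ?_
    rw [Finset.sum_comm]
    refine Finset.sum_congr rfl fun k _ => ?_
    rw [← Finset.mul_sum, hsum1 i k]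
  have e2 : (∑ i, ∑ j, ∑ k, ∑ l, (A j l * (if i = k then (1:ℝ) else 0)) * Q i j k l)
      = ∑ x, ∑ y, A x y * -(ric Q x y) := by
    have step : ∀ i j, (∑ k, ∑ l, (A j l * (if i = k then (1:ℝ) else 0)) * Q i j k l)
        = ∑ l, A j l * Q i j i l := by
      intro i j; rw [Finset.sum_comm]
      refine Finset.sum_congr rfl fun l _ => ?_
      simp
    simp only [step]
    rw [Finset.sum_comm]
    refine Finset.sum_congr rfl fun j _ => ?_
    rw [Finset.sum_comm]
    refine Finset.sum_congr rfl fun l _ => ?_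
    rw [← Finset.mul_sum, hsum2 j l]
  have e3 : (∑ i, ∑ j, ∑ k, ∑ l, (A i l * (if j = k then (1:ℝ) else 0)) * Q i j k l)
      = ∑ x, ∑ y, A x y * ric Q x y := by
    have step : ∀ i j, (∑ k, ∑ l, (A i l * (if j = k then (1:ℝ) else 0)) * Q i j k l)
        = ∑ l, A i l * Q i j j l := by
      intro i j; rw [Finset.sum_comm]
      refine Finset.sum_congr rfl fun l _ => ?_
      simp
    simp only [step]
    refine Finset.sum_congr rfl fun i _ => ?_
    rw [Finset.sum_comm]
    refine Finset.sum_congr rfl fun l _ => ?_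
    rw [← Finset.mul_sum, hsum3 i l]
  have e4 : (∑ i, ∑ j, ∑ k, ∑ l, (A j k * (if i = l then (1:ℝ) else 0)) * Q i j k l)
      = ∑ x, ∑ y, A x y * ric Q x y := by
    have step : ∀ i j k, (∑ l, (A j k * (if i = l then (1:ℝ) else 0)) * Q i j k l)
        = A j k * Q i j k i := by intro i j k; simp
    simp only [step]
    rw [Finset.sum_comm]
    refine Finset.sum_congr rfl fun j _ => ?_
    rw [Finset.sum_comm]
    refine Finset.sum_congr rfl fun k _ => ?_
    rw [← Finset.mul_sum, hsum4 j k]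
  rw [e1, e2, e3, e4]
  simp only [mul_neg, Finset.sum_neg_distrib]
  ring

lemma inner4_scal_left {n : ℕ} (c : ℝ) (T Q : Fin n → Fin n → Fin n → Fin n → ℝ) :
    inner4 (fun X Y Z W => c * T X Y Z W) Q = c * inner4 T Q := by
  simp [inner4, Finset.mul_sum, mul_assoc]

lemma inner4_scal_right {n : ℕ} (c : ℝ) (P T : Fin n → Fin n → Fin n → Fin n → ℝ) :
    inner4 P (fun X Y Z W => c * T X Y Z W) = c * inner4 P T := by
  simp [inner4, Finset.mul_sum, mul_left_comm]

lemma inner4_add_right {n : ℕ} (P f g : Fin n → Fin n → Fin n → Fin n → ℝ) :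
    inner4 P (fun X Y Z W => f X Y Z W + g X Y Z W) = inner4 P f + inner4 P g := by
  simp [inner4, mul_add, Finset.sum_add_distrib]

/-- π is an orthogonal projection of Λ²(Λ²U*): idempotent on it and symmetric,
so the two summands in Q = -(1/(n-2))c(Q)⧢g + (Q + (1/(n-2))c(Q)⧢g) are orthogonal. -/
theorem stmt_7 {n : ℕ} (hn : 3 ≤ n)
    (P Q : Fin n → Fin n → Fin n → Fin n → ℝ)
    (hP : memL2L2 P) (hQ : memL2L2 Q) :
    piMap (piMap Q) = piMap Q ∧
    memL2L2 (piMap Q) ∧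
    inner4 (piMap P) Q = inner4 P (piMap Q) ∧
    inner4 (fun X Y Z W => -(1 / ((n : ℝ) - 2)) * kn (ric Q) (gdelta n) X Y Z W)
      (fun X Y Z W => Q X Y Z W + (1 / ((n : ℝ) - 2)) * kn (ric Q) (gdelta n) X Y Z W)
      = 0 := by
  have hn3 : (3 : ℝ) ≤ (n : ℝ) := by exact_mod_cast hn
  have hc : (2 - (n : ℝ)) ≠ 0 := by linarith
  have hc2 : ((n : ℝ) - 2) ≠ 0 := by linarith
  have hAQ := ric_skew hQ
  have hAQ0 : ∀ i, ric Q i i = 0 := fun i => by have := hAQ i i; linarith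
  have hAP := ric_skew hP
  have hAP0 : ∀ i, ric P i i = 0 := fun i => by have := hAP i i; linarith
  have hknQ := memL2L2_kn (ric Q) hAQ
  -- idempotence
  have hric : ric (piMap Q) = ric Q := by
    funext X Y
    show (∑ i, piMap Q i X Y i) = ric Q X Y
    simp only [piMap]
    rw [← Finset.mul_sum]
    have h := ric_kn (ric Q) hAQ0 X Y
    unfold ric at h ⊢
    rw [h]
    field_simp
  have hidem : piMap (piMap Q) = piMap Q := by
    funext X Y Z W
    simp only [piMap, hric]
  have hmem : memL2L2 (piMap Q) := by
    obtain ⟨k1, k2, k3⟩ := hknQ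
    refine ⟨fun X Y Z W => ?_, fun X Y Z W => ?_, fun X Y Z W => ?_⟩ <;>
      simp only [piMap]
    · rw [k1 X Y Z W]; ring
    · rw [k2 X Y Z W]; ring
    · rw [k3 X Y Z W]; ring
  refine ⟨hidem, hmem, ?_, ?_⟩
  · -- self-adjointness
    have comm : ∀ R S : Fin n → Fin n → Fin n → Fin n → ℝ, inner4 R S = inner4 S R := by
      intro R S; unfold inner4
      refine Finset.sum_congr rfl fun i _ => Finset.sum_congr rfl fun j _ =>
        Finset.sum_congr rfl fun k _ => Finset.sum_congr rfl fun l _ => mul_comm _ _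
    rw [comm P (piMap Q)]
    unfold piMap
    rw [inner4_scal_left, inner4_scal_left, inner4_kn (ric P) hQ, inner4_kn (ric Q) hP]
    congr 1
    congr 1
    exact Finset.sum_congr rfl fun i _ => Finset.sum_congr rfl fun j _ => mul_comm _ _
  · -- orthogonality
    rw [inner4_scal_left, inner4_add_right, inner4_scal_right]
    rw [inner4_kn (ric Q) hQ, inner4_kn (ric Q) hknQ]
    have pull : (∑ i, ∑ j, ric Q i j * ric (kn (ric Q) (gdelta n)) i j)
        = (2 - (n : ℝ)) * ∑ i, ∑ j, ric Q i j * ric Q i j := by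
      rw [Finset.mul_sum]
      refine Finset.sum_congr rfl fun i _ => ?_
      rw [Finset.mul_sum]
      refine Finset.sum_congr rfl fun j _ => ?_
      rw [ric_kn (ric Q) hAQ0 i j]; ring
    rw [pull]
    field_simp
    ring
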